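/- For every integer n ≥ 0, Σ_{r=0}^{n} (−1)^{n−r} 2^{2r} C(n+r+λ, r) C(n+r+1, 2r+1) / C(n+r+1, r) = ((n+1)/(2n+1)) · C(2n+2λ, 2n) / C(n+λ, n), as an identity of rational functions in λ. -/

import Mathlib

open Finset

/-- The generalized binomial coefficient `C(a, b) = a(a-1)⋯(a-b+1)/b!` for real `a`. -/
noncomputable def gbinom (a : ℝ) (b : ℕ) : ℝ :=
  (∏ i ∈ Finset.range b, (a - i)) / (b.factorial : ℝ)

/-!
Write `C = Ring.choose`. Negating the upper index, `C(n+r+λ, r) = (-1)^r C(-λ-n-1, r)`, and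
clearing factorials with `4^r C(r+1/2, r) = (2r+1) C(2r, r)` turns the `r`-th summand, multiplied
by `C(n+1/2, n)`, into `(-1)^n (n+1) C(-λ-n-1, r) C(n+1/2, n-r)`. Chu–Vandermonde then sums the
series: `(2n+1) C(2n, n) Σ = 4^n (n+1) C(n+λ-1/2, n)`. The duplication formula
`C(2n, n) C(2x, 2n) = 4^n C(x, n) C(x-1/2, n)` at `x = n+λ` turns this into the right-hand side.
-/

open Polynomial

section
variable {R : Type*} [CommRing R] [BinomialRing R]

theorem Ring.choose_neg_eq_neg_one_pow_mul (a : R) (n : ℕ) :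
    Ring.choose (-a) n = (-1) ^ n * Ring.choose (a + n - 1) n := by
  rw [Ring.choose_neg, Units.smul_def, zsmul_eq_mul, Int.cast_negOnePow_natCast]

theorem Ring.choose_add_eq_sum_range (a b : R) (n : ℕ) :
    Ring.choose (a + b) n = ∑ r ∈ range (n + 1), Ring.choose a r * Ring.choose b (n - r) := by
  rw [Ring.add_choose_eq n (Commute.all a b),
    Finset.Nat.sum_antidiagonal_eq_sum_range_succ (fun i j => Ring.choose a i * Ring.choose b j)]
end

theorem Nat.choose_mul_two_mul_add_one_mul_centralBinom (n r : ℕ) :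
    (n + r + 1).choose (2 * r + 1) * ((2 * r + 1) * r.centralBinom) =
      (n + 1) * n.choose r * (n + r + 1).choose r := by
  have hmul := Nat.choose_mul (n := n + r + 1) (k := 2 * r + 1) (s := r) (by omega)
  rw [show n + r + 1 - r = n + 1 by omega, show 2 * r + 1 - r = r + 1 by omega] at hmul
  calc (n + r + 1).choose (2 * r + 1) * ((2 * r + 1) * r.centralBinom)
      = (n + r + 1).choose (2 * r + 1) * (2 * r + 1).choose r * (r + 1) := by
        rw [Nat.centralBinom_eq_two_mul_choose, Nat.add_one_mul_choose_eq, Nat.choose_symm_half]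
        ring
    _ = (n + r + 1).choose r * ((n + 1).choose (r + 1) * (r + 1)) := by rw [hmul]; ring
    _ = (n + 1) * n.choose r * (n + r + 1).choose r := by rw [← Nat.add_one_mul_choose_eq]; ring

section
variable {K : Type*} [Field K] [CharZero K]

theorem Ring.factorial_mul_choose_eq_descPochhammer_eval (a : K) (n : ℕ) :
    n.factorial * Ring.choose a n = (descPochhammer K n).eval a := by
  rw [Ring.choose_eq_smul, smul_eq_mul, ← mul_assoc,
    mul_inv_cancel₀ (by exact_mod_cast n.factorial_ne_zero), one_mul,
    ← descPochhammer_map (algebraMap ℤ K), eval_map_algebraMap, aeval_eq_smeval]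

theorem descPochhammer_eval_two_mul (x : K) (n : ℕ) :
    (descPochhammer K (2 * n)).eval (2 * x) =
      4 ^ n * (descPochhammer K n).eval x * (descPochhammer K n).eval (x - 1 / 2) := by
  induction n with
  | zero => simp
  | succ n ih =>
    rw [show 2 * (n + 1) = 2 * n + 1 + 1 by ring, descPochhammer_succ_eval,
      descPochhammer_succ_eval, ih, descPochhammer_succ_eval, descPochhammer_succ_eval]
    push_cast
    ring

theorem Ring.centralBinom_mul_choose_two_mul (x : K) (n : ℕ) :
    n.centralBinom * Ring.choose (2 * x) (2 * n) =
      4 ^ n * Ring.choose x n * Ring.choose (x - 1 / 2) n := by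
  have hfact : ((2 * n).factorial : K) = n.centralBinom * n.factorial * n.factorial := by
    have h := Nat.choose_mul_factorial_mul_factorial (by omega : n ≤ 2 * n)
    rw [show 2 * n - n = n by omega] at h
    rw [Nat.centralBinom_eq_two_mul_choose]
    exact_mod_cast h.symm
  have h := descPochhammer_eval_two_mul x n
  simp only [← Ring.factorial_mul_choose_eq_descPochhammer_eval, hfact] at h
  have hn : (n.factorial : K) ≠ 0 := by exact_mod_cast n.factorial_ne_zero
  apply mul_left_cancel₀ (mul_ne_zero hn hn)
  linear_combination h

theorem Ring.four_pow_mul_choose_add_half (n : ℕ) :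
    4 ^ n * Ring.choose ((n : K) + 1 / 2) n = (2 * n + 1) * n.centralBinom := by
  have h := Ring.centralBinom_mul_choose_two_mul ((n : K) + 1 / 2) n
  rw [show 2 * ((n : K) + 1 / 2) = ((2 * n + 1 : ℕ) : K) by push_cast; ring,
    add_sub_cancel_right, Ring.choose_natCast, Ring.choose_natCast, Nat.choose_self,
    Nat.choose_succ_self_right] at h
  push_cast at h
  linear_combination -h

theorem summand_mul_choose_add_half (l : K) {n r : ℕ} (hr : r ≤ n) :
    (-1) ^ (n - r) * 2 ^ (2 * r) * Ring.choose ((n : K) + r + l) r *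
          ((n + r + 1).choose (2 * r + 1) : K) / ((n + r + 1).choose r : K) *
        Ring.choose ((n : K) + 1 / 2) n =
      (-1) ^ n * (n + 1) *
        (Ring.choose (-l - n - 1) r * Ring.choose ((n : K) + 1 / 2) (n - r)) := by
  have hsign : (-1 : K) ^ (n - r) * (-1) ^ r = (-1) ^ n := by
    rw [← pow_add, Nat.sub_add_cancel hr]
  have hneg : Ring.choose ((n : K) + r + l) r = (-1) ^ r * Ring.choose (-l - n - 1) r := by
    rw [show -l - n - 1 = -((n : K) + l + 1) by ring, Ring.choose_neg_eq_neg_one_pow_mul,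
      ← mul_assoc, ← mul_pow]
    ring_nf
  have hsplit := Ring.choose_smul_choose ((n : K) + 1 / 2) (Nat.sub_le n r)
  rw [Nat.choose_symm hr, Nat.sub_sub_self hr, nsmul_eq_mul, Nat.cast_sub hr,
    show (n : K) + 1 / 2 - (n - r) = r + 1 / 2 by ring] at hsplit
  have hhalf := Ring.four_pow_mul_choose_add_half (K := K) r
  have hnat : ((n + r + 1).choose (2 * r + 1) * ((2 * r + 1) * r.centralBinom) : K) =
      (n + 1) * n.choose r * (n + r + 1).choose r := by
    exact_mod_cast Nat.choose_mul_two_mul_add_one_mul_centralBinom n r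
  have hchoose : ((n + r + 1).choose r : K) ≠ 0 := by
    exact_mod_cast (Nat.choose_pos (n := n + r + 1) (k := r) (by omega)).ne'
  have hhalf_ne : Ring.choose ((r : K) + 1 / 2) r ≠ 0 := by
    intro h
    rw [h, mul_zero] at hhalf
    have hpos : 0 < (2 * r + 1) * r.centralBinom := Nat.mul_pos (by omega) r.centralBinom_pos
    exact hpos.ne' (by exact_mod_cast hhalf.symm)
  rw [hneg, pow_mul, show (2 : K) ^ 2 = 4 by norm_num, div_mul_eq_mul_div, div_eq_iff hchoose]
  apply mul_left_cancel₀ hhalf_ne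
  set c := Ring.choose (-l - n - 1) r
  linear_combination (-1) ^ (n - r) * (-1) ^ r * c * Ring.choose ((n : K) + 1 / 2) n *
      ((n + r + 1).choose (2 * r + 1) : K) * hhalf +
    (-1) ^ (n - r) * (-1) ^ r * c * Ring.choose ((n : K) + 1 / 2) n * hnat +
    (-1) ^ (n - r) * (-1) ^ r * c * (n + 1) * ((n + r + 1).choose r : K) * hsplit +
    (n + 1) * c * Ring.choose ((n : K) + 1 / 2) (n - r) * ((n + r + 1).choose r : K) *
      Ring.choose ((r : K) + 1 / 2) r * hsign

theorem sum_mul_two_mul_add_one_mul_centralBinom (l : K) (n : ℕ) :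
    (∑ r ∈ range (n + 1), (-1) ^ (n - r) * 2 ^ (2 * r) * Ring.choose ((n : K) + r + l) r *
        ((n + r + 1).choose (2 * r + 1) : K) / ((n + r + 1).choose r : K)) *
      ((2 * n + 1) * n.centralBinom) =
    4 ^ n * ((n + 1) * Ring.choose ((n : K) + l - 1 / 2) n) := by
  have hvand : ∑ r ∈ range (n + 1),
      Ring.choose (-l - n - 1) r * Ring.choose ((n : K) + 1 / 2) (n - r) =
        (-1) ^ n * Ring.choose ((n : K) + l - 1 / 2) n := by
    rw [← Ring.choose_add_eq_sum_range, show -l - n - 1 + (n + 1 / 2) = -(l + 1 / 2) by ring,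
      Ring.choose_neg_eq_neg_one_pow_mul, show l + 1 / 2 + n - 1 = (n : K) + l - 1 / 2 by ring]
  rw [← Ring.four_pow_mul_choose_add_half, mul_left_comm, Finset.sum_mul,
    Finset.sum_congr rfl fun r hr ↦
      summand_mul_choose_add_half l (Nat.lt_succ_iff.mp (mem_range.mp hr)),
    ← Finset.mul_sum, hvand]
  have hsq : (-1 : K) ^ n * (-1) ^ n = 1 := by rw [← mul_pow]; norm_num
  linear_combination 4 ^ n * (n + 1) * Ring.choose ((n : K) + l - 1 / 2) n * hsq
end

theorem gbinom_eq_choose (a : ℝ) (b : ℕ) : gbinom a b = Ring.choose a b := by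
  rw [gbinom, ← descPochhammer_eval_eq_prod_range,
    ← Ring.factorial_mul_choose_eq_descPochhammer_eval]
  field_simp

theorem combinatorial_identity_odd (n : ℕ) (l : ℝ) :
    (2 * (n : ℝ) + 1) *
        (∑ r ∈ Finset.range (n + 1),
          (-1 : ℝ) ^ (n - r) * 2 ^ (2 * r) * gbinom ((n : ℝ) + r + l) r *
            ((n + r + 1).choose (2 * r + 1) : ℝ) / ((n + r + 1).choose r : ℝ)) *
      gbinom ((n : ℝ) + l) n =
    ((n : ℝ) + 1) * gbinom (2 * (n : ℝ) + 2 * l) (2 * n) := by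
  simp only [gbinom_eq_choose]
  rw [show 2 * (n : ℝ) + 2 * l = 2 * (n + l) by ring]
  have hsum := sum_mul_two_mul_add_one_mul_centralBinom l n
  have hdup := Ring.centralBinom_mul_choose_two_mul ((n : ℝ) + l) n
  have hcentral : (n.centralBinom : ℝ) ≠ 0 := by exact_mod_cast n.centralBinom_ne_zero
  apply mul_left_cancel₀ hcentral
  linear_combination Ring.choose ((n : ℝ) + l) n * hsum - (n + 1) * hdup
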